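/- Assume additionally that λ(t)/t → 1 and u1(t)/t² → 1 as t → ∞. Then there is no solution (a0, a2) of the ODE system (instA2) defined and bounded on [t*, ∞) for some t* > 0 whose value at t* lies in R∞ := {(a0,a2) : a0 < −1, a2 > 1}: any solution lying in R∞ at time t* either fails to exist for all forward time or is unbounded on [t*, ∞). -/

import Mathlib

open Set Filter Topology

/-- A solution of the ODE system (instA2), with `μ² = u1² − u0²`:
`a0' = −(4λ/μ²)(a2²(u1 − u0) + a0·u1 + u0)`, `a2' = −(3/(2λ))·a2·(a0 + 1)`. -/
def IsSolInstA2 (u0 : ℝ) (lam u1 a0 a2 : ℝ → ℝ) (s : Set ℝ) : Prop :=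
  ∀ t ∈ s,
    HasDerivAt a0 (-(4 * lam t / (u1 t ^ 2 - u0 ^ 2)) *
      (a2 t ^ 2 * (u1 t - u0) + a0 t * u1 t + u0)) t ∧
    HasDerivAt a2 (-(3 / (2 * lam t)) * a2 t * (a0 t + 1)) t

set_option maxHeartbeats 1000000 in
/-- Assuming moreover the asymptotically conical conditions `λ(t)/t → 1` and
`u1(t)/t² → 1` as `t → ∞`, there is no bounded solution of (instA2) on `[t*, ∞)` whose
value at `t*` lies in `R∞ = {a0 < −1, a2 > 1}`: any solution defined on all of `[t*, ∞)`
which lies in `R∞` at time `t*` is unbounded. -/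
theorem RInfty_solutions_unbounded (u0 : ℝ) (lam u1 : ℝ → ℝ)
    (hlamc : ContinuousOn lam (Ioi 0))
    (hlam : ∀ t ∈ Ioi (0 : ℝ), 0 < lam t)
    (hu1' : ∀ t ∈ Ioi (0 : ℝ), HasDerivAt u1 (2 * lam t) t)
    (hu1 : ∀ t ∈ Ioi (0 : ℝ), |u0| < u1 t)
    (hAClam : Tendsto (fun t => lam t / t) atTop (nhds 1))
    (hACu1 : Tendsto (fun t => u1 t / t ^ 2) atTop (nhds 1))
    (a0 a2 : ℝ → ℝ) (tstar : ℝ) (hts : 0 < tstar)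
    (hsol : IsSolInstA2 u0 lam u1 a0 a2 (Ici tstar))
    (hinit : a0 tstar < -1 ∧ 1 < a2 tstar) :
    ¬ ∃ M : ℝ, ∀ t ∈ Ici tstar, |a0 t| ≤ M ∧ |a2 t| ≤ M := by
  rintro ⟨M, hM⟩
  -- openness of the region along continuous solutions
  have hopen : ∀ p ∈ Ici tstar, a0 p < -1 → 1 < a2 p →
      ∃ ε > 0, ∀ y, dist y p < ε → a0 y < -1 ∧ 1 < a2 y := by
    intro p hp h0 h2
    have c0 : ContinuousAt a0 p := (hsol p hp).1.continuousAt
    have c2 : ContinuousAt a2 p := (hsol p hp).2.continuousAt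
    have e1 : ∀ᶠ y in 𝓝 p, a0 y < -1 := c0.eventually_lt_const h0
    have e2 : ∀ᶠ y in 𝓝 p, 1 < a2 y := c2.eventually_const_lt h2
    have := e1.and e2
    rw [Metric.eventually_nhds_iff] at this
    obtain ⟨ε, hε, h⟩ := this
    exact ⟨ε, hε, fun y hy => h hy⟩
  -- Invariance of the region R∞
  have key : ∀ t ∈ Ici tstar, a0 t < -1 ∧ 1 < a2 t := by
    by_contra hcon
    push_neg at hcon
    obtain ⟨t0, ht0, hfail⟩ := hcon
    have hne : {t : ℝ | t ∈ Ici tstar ∧ ¬(a0 t < -1 ∧ 1 < a2 t)}.Nonempty :=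
      ⟨t0, ht0, fun hP => absurd hP.2 (not_lt.mpr (hfail hP.1))⟩
    set S := {t : ℝ | t ∈ Ici tstar ∧ ¬(a0 t < -1 ∧ 1 < a2 t)} with hSdef
    have hbdd : BddBelow S := ⟨tstar, fun x hx => hx.1⟩
    set s := sInf S with hsdef
    have hsts : tstar ≤ s := le_csInf hne fun x hx => hx.1
    have hPbefore : ∀ t, tstar ≤ t → t < s → a0 t < -1 ∧ 1 < a2 t := by
      intro t h1 h2
      by_contra h
      exact absurd (csInf_le hbdd ⟨h1, h⟩) (not_le.mpr h2)
    have hslt : tstar < s := by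
      obtain ⟨ε, hε, hball⟩ := hopen tstar self_mem_Ici hinit.1 hinit.2
      have : tstar + ε / 2 ≤ s := by
        apply le_csInf hne
        intro x hx
        by_contra hxlt
        push_neg at hxlt
        have hxt : tstar ≤ x := hx.1
        refine hx.2 (hball x ?_)
        rw [Real.dist_eq, abs_lt]
        constructor <;> linarith
      linarith
    have hsS : s ∈ S := by
      by_contra hsval
      have hPs : a0 s < -1 ∧ 1 < a2 s := by
        by_contra h; exact hsval ⟨hsts, h⟩
      obtain ⟨ε, hε, hball⟩ := hopen s hsts hPs.1 hPs.2
      obtain ⟨x, hxS, hxlt⟩ := (csInf_lt_iff hbdd hne).mp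
        (by linarith : sInf S < s + ε / 2)
      have hxge : s ≤ x := csInf_le hbdd hxS
      have hxt : tstar ≤ x := hxS.1
      refine hxS.2 (hball x ?_)
      rw [Real.dist_eq, abs_lt]
      constructor <;> linarith
    have hs0 : (0:ℝ) < s := lt_of_lt_of_le hts hsts
    -- left limits
    have hIoo : Ioo tstar s ∈ 𝓝[<] s := Ioo_mem_nhdsLT_of_mem ⟨hslt, le_refl s⟩
    have ha0s_le : a0 s ≤ -1 := by
      have htend : Tendsto a0 (𝓝[<] s) (𝓝 (a0 s)) :=
        (hsol s hsts).1.continuousAt.continuousWithinAt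
      refine le_of_tendsto htend ?_
      filter_upwards [hIoo] with t ht
      exact (hPbefore t ht.1.le ht.2).1.le
    -- a2 is strictly increasing on [tstar, s]
    have hmono : StrictMonoOn a2 (Icc tstar s) := by
      apply strictMonoOn_of_deriv_pos (convex_Icc _ _)
      · exact fun x hx => ((hsol x (mem_of_mem_of_subset hx (Icc_subset_Ici_self))).2.continuousAt).continuousWithinAt
      · intro x hx
        rw [interior_Icc] at hx
        obtain ⟨hP1, hP2⟩ := hPbefore x hx.1.le hx.2
        have hx0 : (0:ℝ) < x := lt_trans hts hx.1
        have hlx : 0 < lam x := hlam x hx0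
        rw [(hsol x (mem_Ici.mpr hx.1.le)).2.deriv]
        have : -(3 / (2 * lam x)) * a2 x * (a0 x + 1)
            = 3 / (2 * lam x) * (a2 x * -(a0 x + 1)) := by ring
        rw [this]
        exact mul_pos (by positivity) (mul_pos (by linarith) (by linarith))
    have ha2s : 1 < a2 s :=
      lt_trans hinit.2 (hmono ⟨le_refl _, hslt.le⟩ ⟨hslt.le, le_refl _⟩ hslt)
    have ha0s : a0 s = -1 := by
      refine le_antisymm ha0s_le ?_
      by_contra h
      push_neg at h
      exact hsS.2 ⟨h, ha2s⟩
    -- the derivative of a0 at s is negative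
    have habs := abs_lt.mp (hu1 s hs0)
    have hμ : 0 < u1 s ^ 2 - u0 ^ 2 := by nlinarith [habs.1, habs.2]
    have hdval : -(4 * lam s / (u1 s ^ 2 - u0 ^ 2)) *
        (a2 s ^ 2 * (u1 s - u0) + a0 s * u1 s + u0) < 0 := by
      have h1 : a2 s ^ 2 * (u1 s - u0) + a0 s * u1 s + u0
          = (u1 s - u0) * (a2 s ^ 2 - 1) := by rw [ha0s]; ring
      rw [h1]
      have hu : 0 < u1 s - u0 := by linarith [habs.2]
      have hls : 0 < lam s := hlam s hs0
      have hpos : 0 < 4 * lam s / (u1 s ^ 2 - u0 ^ 2) := by positivity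
      have : 0 < (u1 s - u0) * (a2 s ^ 2 - 1) := mul_pos hu (by nlinarith)
      nlinarith
    -- but the left slopes are positive, so the derivative is ≥ 0
    have hslope := hasDerivAt_iff_tendsto_slope.mp (hsol s hsts).1
    have hineq : 0 ≤ -(4 * lam s / (u1 s ^ 2 - u0 ^ 2)) *
        (a2 s ^ 2 * (u1 s - u0) + a0 s * u1 s + u0) := by
      refine ge_of_tendsto (hslope.mono_left
        (nhdsWithin_mono s (show Iio s ⊆ {s}ᶜ from fun x hx => ne_of_lt hx))) ?_
      filter_upwards [hIoo] with t ht
      rw [slope_def_field]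
      apply div_nonneg_of_nonpos
      · have := (hPbefore t ht.1.le ht.2).1
        rw [ha0s]; linarith
      · linarith [ht.2]
    linarith
  -- a2 is nondecreasing on [tstar, ∞)
  have hmono2 : StrictMonoOn a2 (Ici tstar) := by
    apply strictMonoOn_of_deriv_pos (convex_Ici _)
    · exact fun x hx => ((hsol x hx).2.continuousAt).continuousWithinAt
    · intro x hx
      rw [interior_Ici] at hx
      obtain ⟨hP1, hP2⟩ := key x (mem_Ici.mpr (mem_Ioi.mp hx).le)
      have hx0 : (0:ℝ) < x := lt_trans hts hx
      have hlx : 0 < lam x := hlam x hx0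
      rw [(hsol x (mem_Ici.mpr (mem_Ioi.mp hx).le)).2.deriv]
      have : -(3 / (2 * lam x)) * a2 x * (a0 x + 1)
          = 3 / (2 * lam x) * (a2 x * -(a0 x + 1)) := by ring
      rw [this]
      exact mul_pos (by positivity) (mul_pos (by linarith) (by linarith))
  have hc : ∀ t ∈ Ici tstar, a2 tstar ≤ a2 t := by
    intro t ht
    rcases eq_or_lt_of_le (mem_Ici.mp ht) with h | h
    · rw [← h]
    · exact (hmono2 self_mem_Ici ht h).le
  -- eventual asymptotic bounds
  have hev1 : ∀ᶠ t in atTop, lam t / t ∈ Ioo (9/10 : ℝ) (11/10) :=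
    hAClam.eventually_mem (Ioo_mem_nhds (by norm_num) (by norm_num))
  have hev2 : ∀ᶠ t in atTop, u1 t / t ^ 2 ∈ Ioo (9/10 : ℝ) (11/10) :=
    hACu1.eventually_mem (Ioo_mem_nhds (by norm_num) (by norm_num))
  have hbig : ∀ᶠ t in atTop, (9/10) * t ≤ lam t ∧ lam t ≤ (11/10) * t ∧
      (9/10) * t ^ 2 ≤ u1 t ∧ u1 t ≤ (11/10) * t ^ 2 ∧ 4 * |u0| ≤ u1 t := by
    filter_upwards [hev1, hev2, eventually_ge_atTop (1:ℝ),
      eventually_ge_atTop ((40/9) * |u0|)] with t h1 h2 h3 h4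
    have ht0 : (0:ℝ) < t := lt_of_lt_of_le one_pos h3
    have ht2 : (0:ℝ) < t ^ 2 := by positivity
    have b1 : (9/10) * t ≤ lam t := ((lt_div_iff₀ ht0).mp h1.1).le
    have b2 : lam t ≤ (11/10) * t := ((div_lt_iff₀ ht0).mp h1.2).le
    have b3 : (9/10) * t ^ 2 ≤ u1 t := ((lt_div_iff₀ ht2).mp h2.1).le
    have b4 : u1 t ≤ (11/10) * t ^ 2 := ((div_lt_iff₀ ht2).mp h2.2).le
    refine ⟨b1, b2, b3, b4, ?_⟩
    nlinarith [abs_nonneg u0, h3, h4]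
  obtain ⟨t1', ht1'⟩ := eventually_atTop.mp hbig
  set t1 : ℝ := max t1' tstar with ht1def
  have ht1star : tstar ≤ t1 := le_max_right _ _
  have hB : ∀ t, t1 ≤ t → (9/10) * t ≤ lam t ∧ lam t ≤ (11/10) * t ∧
      (9/10) * t ^ 2 ≤ u1 t ∧ u1 t ≤ (11/10) * t ^ 2 ∧ 4 * |u0| ≤ u1 t :=
    fun t ht => ht1' t (le_trans (le_max_left _ _) ht)
  set c : ℝ := a2 tstar with hcdef
  have hc1 : 1 < c := hinit.2
  set K : ℝ := (c ^ 2 - 1) / 2 with hKdef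
  have hK : 0 < K := by rw [hKdef]; nlinarith
  set φ : ℝ → ℝ := fun t => a0 t - 4 * Real.log (a2 t) + K * Real.log t with hφdef
  -- derivative of φ is nonpositive on [t1, ∞)
  have hder : ∀ x ∈ Ici t1, ∃ v, v ≤ 0 ∧ HasDerivAt φ v x := by
    intro x hx
    have hxstar : tstar ≤ x := le_trans ht1star hx
    have hx0 : (0:ℝ) < x := lt_of_lt_of_le hts hxstar
    obtain ⟨hl1, hl2, hum1, hum2, hu0b⟩ := hB x hx
    obtain ⟨hA, hA2⟩ := key x hxstar
    have hcx : c ≤ a2 x := hc x hxstar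
    have ha2pos : 0 < a2 x := lt_trans zero_lt_one hA2
    have hLpos : 0 < lam x := hlam x hx0
    have habs := abs_lt.mp (hu1 x hx0)
    have hUpos : 0 < u1 x := lt_of_le_of_lt (abs_nonneg u0) (hu1 x hx0)
    have hμ : 0 < u1 x ^ 2 - u0 ^ 2 := by nlinarith [habs.1, habs.2]
    have hLne : lam x ≠ 0 := ne_of_gt hLpos
    have ha2ne : a2 x ≠ 0 := ne_of_gt ha2pos
    have hxne : x ≠ 0 := ne_of_gt hx0
    have hμne : u1 x ^ 2 - u0 ^ 2 ≠ 0 := ne_of_gt hμ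
    have hd : HasDerivAt φ
        (-(4 * lam x / (u1 x ^ 2 - u0 ^ 2)) *
          (a2 x ^ 2 * (u1 x - u0) + a0 x * u1 x + u0)
         - 4 * (-(3 / (2 * lam x)) * a2 x * (a0 x + 1) / a2 x) + K * x⁻¹) x := by
      rw [hφdef]
      exact ((hsol x hxstar).1.sub
        (((hsol x hxstar).2.log ha2ne).const_mul 4)).add
        ((Real.hasDerivAt_log hxne).const_mul K)
    refine ⟨_, ?_, hd⟩
    have e1 : -(4 * lam x / (u1 x ^ 2 - u0 ^ 2)) *
          (a2 x ^ 2 * (u1 x - u0) + a0 x * u1 x + u0)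
         - 4 * (-(3 / (2 * lam x)) * a2 x * (a0 x + 1) / a2 x) + K * x⁻¹
        = -(4 * lam x * ((u1 x - u0) * (a2 x ^ 2 - 1)) / (u1 x ^ 2 - u0 ^ 2))
          + (a0 x + 1) * (6 / lam x - 4 * lam x * u1 x / (u1 x ^ 2 - u0 ^ 2))
          + K / x := by
      field_simp
      ring
    rw [e1]
    have hKe : c ^ 2 - 1 = 2 * K := by rw [hKdef]; ring
    have ha2sq : 2 * K ≤ a2 x ^ 2 - 1 := by nlinarith [hcx, hc1]
    -- first term dominates K / x
    have h1 : K / x ≤ 4 * lam x * ((u1 x - u0) * (a2 x ^ 2 - 1)) / (u1 x ^ 2 - u0 ^ 2) := by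
      rw [div_le_div_iff₀ hx0 hμ]
      have husub : 0 < u1 x - u0 := by linarith [habs.2]
      have hinner : K * (u1 x + u0) ≤ 4 * lam x * ((a2 x ^ 2 - 1) * x) := by
        have s1 : K * (u1 x + u0) ≤ K * ((11/8) * x ^ 2) := by
          apply mul_le_mul_of_nonneg_left _ hK.le
          have : u0 ≤ |u0| := le_abs_self u0
          linarith
        have s2 : K * ((11/8) * x ^ 2) ≤ 4 * lam x * ((a2 x ^ 2 - 1) * x) := by
          have p1 : 0 ≤ a2 x ^ 2 - 1 := by nlinarith
          have p2 : (9/10) * x * ((a2 x ^ 2 - 1) * x) ≤ lam x * ((a2 x ^ 2 - 1) * x) :=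
            mul_le_mul_of_nonneg_right hl1 (by positivity)
          nlinarith [mul_le_mul_of_nonneg_right ha2sq (mul_pos hx0 hx0).le]
        linarith
      have := mul_le_mul_of_nonneg_left hinner husub.le
      nlinarith [this]
    -- middle term is nonpositive
    have h2 : (a0 x + 1) * (6 / lam x - 4 * lam x * u1 x / (u1 x ^ 2 - u0 ^ 2)) ≤ 0 := by
      apply mul_nonpos_of_nonpos_of_nonneg (by linarith)
      rw [sub_nonneg, div_le_div_iff₀ hμ hLpos]
      have hL2 : lam x ^ 2 ≤ (121/100) * x ^ 2 := by nlinarith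
      have hx2U : x ^ 2 ≤ (10/9) * u1 x := by linarith
      have hu0sq : 16 * u0 ^ 2 ≤ u1 x ^ 2 := by
        nlinarith [abs_nonneg u0, sq_abs u0, hu0b]
      nlinarith [mul_le_mul_of_nonneg_right hL2 hUpos.le,
        mul_le_mul_of_nonneg_right hx2U hUpos.le]
    linarith
  -- φ is antitone on [t1, ∞)
  have hφanti : AntitoneOn φ (Ici t1) := by
    apply antitoneOn_of_deriv_nonpos (convex_Ici t1)
    · intro x hx
      obtain ⟨v, hv0, hv⟩ := hder x hx
      exact hv.continuousAt.continuousWithinAt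
    · intro x hx
      rw [interior_Ici] at hx
      obtain ⟨v, hv0, hv⟩ := hder x (mem_Ici.mpr (mem_Ioi.mp hx).le)
      exact hv.differentiableAt.differentiableWithinAt
    · intro x hx
      rw [interior_Ici] at hx
      obtain ⟨v, hv0, hv⟩ := hder x (mem_Ici.mpr (mem_Ioi.mp hx).le)
      rw [hv.deriv]
      exact hv0
  -- conclude: pick T large and derive the contradiction
  have hMc : c ≤ M := le_trans (le_abs_self _) (hM tstar self_mem_Ici).2
  have hM1 : 1 < M := lt_of_lt_of_le hc1 hMc
  set C : ℝ := φ t1 + M + 4 * Real.log M with hCdef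
  set T : ℝ := max t1 (Real.exp ((C + 1) / K)) with hTdef
  have hT1 : t1 ≤ T := le_max_left _ _
  have hTstar : tstar ≤ T := le_trans ht1star hT1
  have hphle : φ T ≤ φ t1 := hφanti self_mem_Ici (mem_Ici.mpr hT1) hT1
  have hbnd := hM T (mem_Ici.mpr hTstar)
  have ha0T : -M ≤ a0 T := (abs_le.mp hbnd.1).1
  have ha2T : a2 T ≤ M := le_trans (le_abs_self _) hbnd.2
  have ha2Tpos : 0 < a2 T := lt_trans zero_lt_one (key T (mem_Ici.mpr hTstar)).2
  have hlog2 : Real.log (a2 T) ≤ Real.log M := Real.log_le_log ha2Tpos ha2T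
  have hlogT : (C + 1) / K ≤ Real.log T := by
    rw [← Real.log_exp ((C + 1) / K)]
    exact Real.log_le_log (Real.exp_pos _) (le_max_right _ _)
  have hKlog : C + 1 ≤ K * Real.log T := by
    have := mul_le_mul_of_nonneg_left hlogT hK.le
    have hKK : K * ((C + 1) / K) = C + 1 := by field_simp
    linarith
  have hφT : φ T = a0 T - 4 * Real.log (a2 T) + K * Real.log T := by rw [hφdef]
  have hφt1 : C = φ t1 + M + 4 * Real.log M := hCdef
  linarith [hphle, ha0T, hlog2, hKlog]
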